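/- Let n ≥ 1, let M be an additive subgroup of ℝⁿ that is dense in ℝⁿ and contains u = (1,1,…,1), and set M⁺ = { g ∈ M : every coordinate of g is strictly positive } ∪ {0}. Fix k ∈ {1,…,n} and let φₖ : M → ℝ be the k-th coordinate functional, φₖ(x) = xₖ. If φ : M → ℝ is an additive map with 0 ≤ φ(g) ≤ φₖ(g) for all g ∈ M⁺, then there exists a real number r with 0 ≤ r ≤ 1 such that φ(x) = r·xₖ for all x ∈ M. In particular, the coordinate functionals φ₁, …, φₙ are exactly the extreme points of the set of states on (M, M⁺, u). -/

import Mathlib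

/-- The positive cone of an additive subgroup `M` of `ℝⁿ`:
elements of `M` all of whose coordinates are strictly positive, together with `0`. -/
def Mplus (n : ℕ) (M : AddSubgroup (EuclideanSpace ℝ (Fin n))) :
    Set (EuclideanSpace ℝ (Fin n)) :=
  {g | g ∈ M ∧ ∀ i, 0 < g i} ∪ {0}

/-- The states on `(M, M⁺, u)` where `u = (1,…,1)`: additive maps `M → ℝ` that are
nonnegative on `M⁺` and send `u` to `1`. -/
def states (n : ℕ) (M : AddSubgroup (EuclideanSpace ℝ (Fin n)))
    (hu : ((WithLp.toLp 2 (fun _ => (1 : ℝ)) : EuclideanSpace ℝ (Fin n))) ∈ M) : Set (M →+ ℝ) :=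
  {ψ | (∀ v : M, (v : EuclideanSpace ℝ (Fin n)) ∈ Mplus n M → 0 ≤ ψ v) ∧
    ψ ⟨(WithLp.toLp 2 (fun _ => (1 : ℝ))), hu⟩ = 1}


/-!
If `0 ≤ φ ≤ xₖ` on `M⁺`, then by density `φ w ≤ 0` whenever `wₖ < 0`: `w` lies below elements
of `M⁺` with arbitrarily small `k`-th coordinate. Comparing `b • x` with `a • u` for integers
`a`, `b` with `a / b` close to `xₖ` then forces `φ x = φ(u) xₖ`.

The same comparison shows that a state `ψ` satisfies `ψ v ≤ max vᵢ`, so it is `1`-Lipschitz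
and extends by density to a continuous, hence linear, functional on `ℝⁿ` which is nonnegative on
the positive orthant, i.e. a convex combination of coordinates. So the states are the convex hull
of the coordinate functionals; extreme points of a convex hull lie among its generators, and each
coordinate functional is extreme by the first part.
-/

open Set

section RationalComparison

variable {A : Type*} [AddCommGroup A]

lemma AddMonoidHom.le_mul_of_forall_int_lt (f : A →+ ℝ) {u x : A} {c : ℝ} (hu : 0 ≤ f u)
    (h : ∀ (a : ℤ) (b : ℕ), 0 < b → c * b < a → f (b • x) ≤ f (a • u)) :
    f x ≤ c * f u := by
  have hq : ∀ q : ℚ, c < q → f x ≤ q * f u := by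
    intro q hcq
    have hden : (0 : ℝ) < q.den := by exact_mod_cast q.pos
    have hqdiv : (q : ℝ) = q.num / q.den := by exact_mod_cast (Rat.num_div_den q).symm
    rw [hqdiv, lt_div_iff₀ hden] at hcq
    have := h q.num q.den q.pos hcq
    rw [map_nsmul, map_zsmul, nsmul_eq_mul, zsmul_eq_mul] at this
    rw [hqdiv, div_mul_eq_mul_div, le_div_iff₀ hden]
    linarith
  rcases hu.eq_or_lt with h0 | hpos
  · obtain ⟨q, hcq⟩ := exists_rat_gt c
    simpa [← h0] using hq q hcq
  · rw [← div_le_iff₀ hpos]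
    exact le_of_forall_lt_rat_imp_le fun q hcq => (div_le_iff₀ hpos).2 (hq q hcq)

theorem AddMonoidHom.eq_mul_of_neg_imp_nonpos (f ℓ : A →+ ℝ) {u : A} (hℓu : ℓ u = 1)
    (h : ∀ w, ℓ w < 0 → f w ≤ 0) : 0 ≤ f u ∧ ∀ x, f x = f u * ℓ x := by
  have hu : 0 ≤ f u := by simpa using h (-u) (by simp [hℓu])
  have hle : ∀ x, f x ≤ ℓ x * f u := fun x =>
    f.le_mul_of_forall_int_lt hu fun a b _ hab => by
      have := h (b • x - a • u) (by
        simp only [map_sub, map_nsmul, nsmul_eq_mul, map_zsmul, hℓu, zsmul_eq_mul, mul_one, sub_neg]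
        linarith)
      rwa [map_sub, sub_nonpos] at this
  refine ⟨hu, fun x => le_antisymm (by linarith [hle x]) ?_⟩
  have := hle (-x)
  simp only [map_neg, neg_mul, neg_le_neg_iff] at this
  linarith

end RationalComparison

lemma Dense.exists_mem_coord_between {ι : Type*} [Fintype ι] {s : Set (EuclideanSpace ℝ ι)}
    (hs : Dense s) (x : EuclideanSpace ℝ ι) {ε : ℝ} (hε : 0 < ε) :
    ∃ y ∈ s, ∀ i, x i < y i ∧ y i < x i + ε := by
  let c : EuclideanSpace ℝ ι := WithLp.toLp 2 fun i => x i + ε / 2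
  obtain ⟨y, hys, hy⟩ := hs.exists_dist_lt c (half_pos hε)
  refine ⟨y, hys, fun i => ?_⟩
  have := (PiLp.dist_apply_le c y i).trans_lt hy
  rw [Real.dist_eq, abs_sub_lt_iff, show c i = x i + ε / 2 from rfl] at this
  constructor <;> linarith

theorem Dense.exists_continuousLinearMap_eq_of_abs_le {E : Type*} [NormedAddCommGroup E]
    [NormedSpace ℝ E] {M : AddSubgroup E} (hM : Dense (M : Set E)) (f : M →+ ℝ) (C : NNReal)
    (hf : ∀ x : M, |f x| ≤ C * ‖(x : E)‖) : ∃ L : E →L[ℝ] ℝ, ∀ x : M, L x = f x := by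
  classical
  set g : E → ℝ := fun x => if h : x ∈ M then f ⟨x, h⟩ else 0
  have hg : ∀ x (hx : x ∈ M), g x = f ⟨x, hx⟩ := fun x hx => dif_pos hx
  have hlip : LipschitzOnWith C g M := LipschitzOnWith.of_dist_le_mul fun x hx y hy => by
    rw [Real.dist_eq, dist_eq_norm, hg x hx, hg y hy, ← map_sub]
    exact hf _
  obtain ⟨G, hGlip, hGg⟩ := hlip.extend_real
  have hGM : ∀ x : M, G x = f x := fun x => (hGg x.2).symm.trans (hg x x.2)
  have hadd : ∀ a b, G (a + b) = G a + G b := by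
    have := Continuous.ext_on (hM.prod hM) (f := fun p : E × E => G (p.1 + p.2))
      (g := fun p => G p.1 + G p.2) (hGlip.continuous.comp continuous_add)
      ((hGlip.continuous.comp continuous_fst).add (hGlip.continuous.comp continuous_snd)) ?_
    · exact fun a b => congrFun this (a, b)
    rintro ⟨a, b⟩ ⟨ha, hb⟩
    have := hGM (⟨a, ha⟩ + ⟨b, hb⟩)
    rwa [map_add, ← hGM, ← hGM] at this
  exact ⟨(AddMonoidHom.mk' G hadd).toRealLinearMap hGlip.continuous, hGM⟩

lemma EuclideanSpace.map_eq_sum_single {𝕜 ι F G : Type*} [RCLike 𝕜] [Fintype ι] [DecidableEq ι]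
    [AddCommGroup F] [Module 𝕜 F] [FunLike G (EuclideanSpace 𝕜 ι) F]
    [LinearMapClass G 𝕜 (EuclideanSpace 𝕜 ι) F] (L : G) (x : EuclideanSpace 𝕜 ι) :
    L x = ∑ i, x i • L (EuclideanSpace.single i 1) := by
  conv_lhs => rw [← (EuclideanSpace.basisFun ι 𝕜).sum_repr x]
  simp [map_sum, map_smul]

local notation "ℝ^" n:max => EuclideanSpace ℝ (Fin n)

variable {n : ℕ} {M : AddSubgroup (ℝ^n)}

lemma mem_Mplus_of_pos {v : ℝ^n} (hv : v ∈ M) (hpos : ∀ i, 0 < v i) : v ∈ Mplus n M :=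
  Or.inl ⟨hv, hpos⟩

lemma coord_nonneg_of_mem_Mplus {v : ℝ^n} (hv : v ∈ Mplus n M) (i : Fin n) : 0 ≤ v i := by
  rcases hv with ⟨-, hpos⟩ | rfl
  exacts [(hpos i).le, le_rfl]

noncomputable def coordHom (M : AddSubgroup (ℝ^n)) (j : Fin n) : M →+ ℝ :=
  AddMonoidHom.mk' (fun x => (x : ℝ^n) j) fun _ _ => rfl

@[simp] lemma coordHom_apply (j : Fin n) (x : M) : coordHom M j x = (x : ℝ^n) j := rfl

section Dominated

variable (hdense : Dense (M : Set (ℝ^n))) {k : Fin n} {φ : M →+ ℝ}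
  (hφ : ∀ v : M, (v : ℝ^n) ∈ Mplus n M → 0 ≤ φ v ∧ φ v ≤ (v : ℝ^n) k)
include hdense hφ

/-- By density, `w` lies below elements of `M⁺` whose `k`-th coordinate is arbitrarily close to
`max (w k) 0 = 0`. -/
lemma map_nonpos_of_coord_nonpos {w : M} (hw : (w : ℝ^n) k ≤ 0) : φ w ≤ 0 := by
  refine le_of_forall_pos_le_add fun ε hε => ?_
  obtain ⟨g, hgM, hg⟩ :=
    hdense.exists_mem_coord_between (WithLp.toLp 2 fun i => max ((w : ℝ^n) i) 0) hε
  have hgw : 0 ≤ φ (⟨g, hgM⟩ - w) := (hφ _ <| mem_Mplus_of_pos (M.sub_mem hgM w.2) fun i => by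
    simpa using (le_max_left _ _).trans_lt (hg i).1).1
  have hφg : φ ⟨g, hgM⟩ ≤ g k :=
    (hφ _ <| mem_Mplus_of_pos hgM fun i => (le_max_right _ _).trans_lt (hg i).1).2
  have hgk : g k < ε := by simpa [max_eq_right hw] using (hg k).2
  rw [map_sub] at hgw
  linarith

lemma exists_eq_mul_coord_of_dominated
    (hu : ((WithLp.toLp 2 (fun _ => (1 : ℝ)) : ℝ^n)) ∈ M) :
    ∃ r : ℝ, 0 ≤ r ∧ r ≤ 1 ∧ ∀ x : M, φ x = r * (x : ℝ^n) k := by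
  obtain ⟨hr, hrep⟩ := φ.eq_mul_of_neg_imp_nonpos (coordHom M k) (u := ⟨_, hu⟩) rfl
    fun w hw => map_nonpos_of_coord_nonpos hdense hφ hw.le
  exact ⟨_, hr, (hφ ⟨_, hu⟩ (mem_Mplus_of_pos hu fun _ => one_pos)).2, hrep⟩

end Dominated

section States

variable (hu : ((WithLp.toLp 2 (fun _ => (1 : ℝ)) : ℝ^n)) ∈ M)
include hu

lemma convex_states : Convex ℝ (states n M hu) := by
  rintro ψ₁ ⟨h₁, h₁u⟩ ψ₂ ⟨h₂, h₂u⟩ a b ha hb hab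
  refine ⟨fun v hv => ?_, by simp [h₁u, h₂u, hab]⟩
  simpa using add_nonneg (mul_nonneg ha (h₁ v hv)) (mul_nonneg hb (h₂ v hv))

lemma coordHom_mem_states (j : Fin n) : coordHom M j ∈ states n M hu :=
  ⟨fun _ hv => coord_nonneg_of_mem_Mplus hv j, rfl⟩

variable {hu} {ψ : M →+ ℝ}

lemma state_le_of_coord_le (hψ : ψ ∈ states n M hu) (v : M) {c : ℝ}
    (hc : ∀ i, (v : ℝ^n) i ≤ c) : ψ v ≤ c := by
  have hu0 : 0 ≤ ψ ⟨_, hu⟩ := by rw [hψ.2]; exact zero_le_one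
  simpa [hψ.2] using ψ.le_mul_of_forall_int_lt (x := v) (c := c) hu0 fun a b _ hab => by
    have hmem : ((a • ⟨_, hu⟩ - b • v : M) : ℝ^n) ∈ Mplus n M :=
      mem_Mplus_of_pos (SetLike.coe_mem _) fun i => by
        have : (b : ℝ) * (v : ℝ^n) i ≤ b * c := by gcongr; exact hc i
        simp only [AddSubgroupClass.coe_sub, AddSubgroupClass.coe_zsmul,
          AddSubmonoidClass.coe_nsmul, PiLp.sub_apply, PiLp.smul_apply, zsmul_eq_mul, mul_one,
          nsmul_eq_mul, sub_pos]
        linarith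
    rw [← sub_nonneg, ← map_sub]
    exact hψ.1 _ hmem

lemma abs_state_le_norm (hψ : ψ ∈ states n M hu) (v : M) : |ψ v| ≤ ‖(v : ℝ^n)‖ := by
  have hcoord : ∀ (w : M) i, (w : ℝ^n) i ≤ ‖(w : ℝ^n)‖ := fun w i =>
    (le_abs_self _).trans (PiLp.norm_apply_le (w : ℝ^n) i)
  refine abs_le.2 ⟨?_, state_le_of_coord_le hψ v (hcoord v)⟩
  have := state_le_of_coord_le hψ (-v) (hcoord (-v))
  simp only [map_neg, AddSubgroup.coe_neg, norm_neg] at this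
  linarith

lemma continuousLinearMap_nonneg_of_eq_state (hdense : Dense (M : Set (ℝ^n)))
    (hψ : ψ ∈ states n M hu) {L : ℝ^n →L[ℝ] ℝ} (hL : ∀ x : M, L x = ψ x) {x : ℝ^n}
    (hx : ∀ i, 0 < x i) : 0 ≤ L x := by
  set U : Set (ℝ^n) := {x | ∀ i, 0 < x i}
  have hU : IsOpen U := by
    simp only [U, ofPred_forall]
    exact isOpen_iInter_of_finite fun i => isOpen_lt continuous_const (PiLp.continuous_apply 2 _ i)
  have hsub : closure (U ∩ M) ⊆ {x | 0 ≤ L x} :=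
    closure_minimal (fun y ⟨hyU, hyM⟩ => by
      simpa [hL ⟨y, hyM⟩] using hψ.1 ⟨y, hyM⟩ (mem_Mplus_of_pos hyM hyU))
      (isClosed_le continuous_const L.continuous)
  exact hsub (hdense.open_subset_closure_inter hU hx)

lemma exists_eq_sum_coordHom_of_mem_states (hdense : Dense (M : Set (ℝ^n)))
    (hψ : ψ ∈ states n M hu) :
    ∃ r : Fin n → ℝ, (∀ j, 0 ≤ r j) ∧ ∑ j, r j = 1 ∧ ψ = ∑ j, r j • coordHom M j := by
  obtain ⟨L, hL⟩ := hdense.exists_continuousLinearMap_eq_of_abs_le ψ 1 (by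
    simpa using abs_state_le_norm hψ)
  have hLsum := EuclideanSpace.map_eq_sum_single L
  have hL1 : L (WithLp.toLp 2 fun _ => 1) = 1 := (hL ⟨_, hu⟩).trans hψ.2
  refine ⟨fun j => L (EuclideanSpace.single j 1), fun j => ?_, ?_, ?_⟩
  · refine le_of_forall_pos_le_add fun t ht => ?_
    have := continuousLinearMap_nonneg_of_eq_state hdense hψ hL
      (x := EuclideanSpace.single j 1 + t • WithLp.toLp 2 fun _ => 1) fun i => by
        by_cases hij : i = j <;> simp [hij, ht, add_pos_of_nonneg_of_pos zero_le_one ht]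
    simpa [hL1] using this
  · simpa [hL1] using (hLsum (WithLp.toLp 2 fun _ => 1)).symm
  · ext x
    rw [← hL x, hLsum]
    simp [mul_comm]

end States

theorem states_eq_convexHull (hdense : Dense (M : Set (ℝ^n)))
    (hu : ((WithLp.toLp 2 (fun _ => (1 : ℝ)) : ℝ^n)) ∈ M) :
    states n M hu = convexHull ℝ (range (coordHom M)) := by
  refine subset_antisymm (fun ψ hψ => ?_)
    (convexHull_min (range_subset_iff.2 (coordHom_mem_states hu)) (convex_states hu))
  obtain ⟨r, hr0, hr1, rfl⟩ := exists_eq_sum_coordHom_of_mem_states hdense hψ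
  exact (convex_convexHull ℝ _).sum_mem (fun j _ => hr0 j) hr1
    fun j _ => subset_convexHull ℝ _ (mem_range_self j)

/-- If the `j`-th coordinate is `a ψ₁ + b ψ₂`, then `a ψ₁` is squeezed between `0` and it. -/
theorem coordHom_mem_extremePoints_states (hdense : Dense (M : Set (ℝ^n)))
    (hu : ((WithLp.toLp 2 (fun _ => (1 : ℝ)) : ℝ^n)) ∈ M) (j : Fin n) :
    coordHom M j ∈ extremePoints ℝ (states n M hu) := by
  refine ⟨coordHom_mem_states hu j, fun ψ₁ h₁ ψ₂ h₂ ⟨a, b, ha, hb, _, hsum⟩ => ?_⟩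
  obtain ⟨r, -, -, hr⟩ := exists_eq_mul_coord_of_dominated hdense (φ := a • ψ₁) (k := j)
    (fun v hv => by
      have hv₁ := h₁.1 v hv
      have hv₂ := h₂.1 v hv
      have := DFunLike.congr_fun hsum v
      simp only [AddMonoidHom.add_apply, AddMonoidHom.smul_apply, smul_eq_mul,
        coordHom_apply] at this ⊢
      constructor <;> nlinarith) hu
  have hra : r = a := by simpa [h₁.2] using (hr ⟨_, hu⟩).symm
  ext x
  simpa [hra, ha.ne'] using hr x

theorem stmt17_general (n : ℕ) (M : AddSubgroup (EuclideanSpace ℝ (Fin n)))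
    (hdense : Dense (M : Set (EuclideanSpace ℝ (Fin n))))
    (hu : ((WithLp.toLp 2 (fun _ => (1 : ℝ)) : EuclideanSpace ℝ (Fin n))) ∈ M)
    (k : Fin n) (φ : M →+ ℝ)
    (hφ : ∀ v : M, (v : EuclideanSpace ℝ (Fin n)) ∈ Mplus n M →
      0 ≤ φ v ∧ φ v ≤ (v : EuclideanSpace ℝ (Fin n)) k) :
    (∃ r : ℝ, 0 ≤ r ∧ r ≤ 1 ∧
      ∀ x : M, φ x = r * (x : EuclideanSpace ℝ (Fin n)) k) ∧
    Set.extremePoints ℝ (states n M hu) =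
      {ψ : M →+ ℝ | ∃ j : Fin n, ∀ x : M, ψ x = (x : EuclideanSpace ℝ (Fin n)) j} := by
  have hcoord : {ψ : M →+ ℝ | ∃ j : Fin n, ∀ x : M, ψ x = (x : ℝ^n) j} = range (coordHom M) := by
    ext ψ
    simp [AddMonoidHom.ext_iff, eq_comm]
  refine ⟨exists_eq_mul_coord_of_dominated hdense hφ hu, hcoord ▸ subset_antisymm ?_ ?_⟩
  · rw [states_eq_convexHull hdense hu]
    exact extremePoints_convexHull_subset
  · rintro _ ⟨j, rfl⟩
    exact coordHom_mem_extremePoints_states hdense hu j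

theorem stmt17 (n : ℕ) (hn : 1 ≤ n) (M : AddSubgroup (EuclideanSpace ℝ (Fin n)))
    (hdense : Dense (M : Set (EuclideanSpace ℝ (Fin n))))
    (hu : ((WithLp.toLp 2 (fun _ => (1 : ℝ)) : EuclideanSpace ℝ (Fin n))) ∈ M)
    (k : Fin n) (φ : M →+ ℝ)
    (hφ : ∀ v : M, (v : EuclideanSpace ℝ (Fin n)) ∈ Mplus n M →
      0 ≤ φ v ∧ φ v ≤ (v : EuclideanSpace ℝ (Fin n)) k) :
    (∃ r : ℝ, 0 ≤ r ∧ r ≤ 1 ∧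
      ∀ x : M, φ x = r * (x : EuclideanSpace ℝ (Fin n)) k) ∧
    Set.extremePoints ℝ (states n M hu) =
      {ψ : M →+ ℝ | ∃ j : Fin n, ∀ x : M, ψ x = (x : EuclideanSpace ℝ (Fin n)) j} :=
  stmt17_general n M hdense hu k φ hφ
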